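/- There exists N₀ such that for all n ≥ N₀, every (n, 2; D_1)-reconstruction code C ⊆ {0,1}^n satisfies |C| ≤ 4·2^n / log₂ n; equivalently, the redundancy n − log₂|C| of any (n,2;D_1)-reconstruction code is at least log₂ log₂ n − 2 for all sufficiently large n. -/

import Mathlib

/-- The `t`-deletion ball of a binary word `x`: all subsequences of `x`
of length `|x| - t` (empty when `t > |x|`). -/
def deletionBall (t : ℕ) (x : List Bool) : Set (List Bool) :=
  {z | z.Sublist x ∧ z.length + t = x.length}

/-- `C` is an `(n, N; D_t)`-reconstruction code. -/
def IsReconCode (n N t : ℕ) (C : Set (List Bool)) : Prop :=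
  (∀ x ∈ C, x.length = n) ∧
  ∀ x ∈ C, ∀ y ∈ C, x ≠ y → (deletionBall t x ∩ deletionBall t y).ncard < N

/-!
For `i < j ≤ m` the words `pattern m i = (01)^i 0 (01)^(m-i)` and `pattern m j` share the two
1-deletions `(01)^m` and `(01)^i 0 (01)^(j-i-1) 0 (01)^(m-j)`, also inside any common context
`u _ v`. So an `(n, 2; D_1)`-code contains at most one word of each family `u ++ pattern m i ++ v`.
Cut words of length `n = L B + r` into `B` blocks of length `L = 2m + 1` and a tail of length `r`;
splitting on the first block, induction on `B` gives `(m + 1) |C| ≤ 2^n + m 2^r (2^L - m - 1)^B`,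
and Bernoulli's inequality turns this into `|C| ≤ 2^n (1 / (m + 1) + 2^L / (B (m + 1)))`.
For `n ≥ 2^21`, `t = ⌊log₂ n⌋` and `m = ⌊t / 3⌋`, the two terms are at most
`3 · 2^n / (t + 1)` and `2^n / (t + 1)`.
-/

open Finset

section Words

variable (α : Type*) [Fintype α]

def words (k : ℕ) : Finset (List α) :=
  (univ : Finset (Fin k → α)).map ⟨List.ofFn, List.ofFn_injective⟩

variable {α}

@[simp] lemma mem_words {k : ℕ} {x : List α} : x ∈ words α k ↔ x.length = k := by
  simp only [words, mem_map, mem_univ, true_and, Function.Embedding.coeFn_mk]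
  refine ⟨fun ⟨f, hf⟩ => hf ▸ List.length_ofFn, fun h => ?_⟩
  subst h
  exact ⟨x.get, List.ofFn_get x⟩

lemma card_words (k : ℕ) : #(words α k) = Fintype.card α ^ k := by
  simp [words]

lemma card_le_sum_card_preimage_append {S : Finset (List α)} {L : ℕ}
    (hS : ∀ x ∈ S, L ≤ x.length) :
    #S ≤ ∑ y ∈ words α L, #(S.preimage (y ++ ·) (List.append_right_injective y).injOn) := by
  rw [← card_sigma]
  refine card_le_card_of_injOn (fun x => ⟨x.take L, x.drop L⟩) (fun x hx => ?_) ?_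
  · simp [List.length_take, hS x hx, hx]
  · intro x _ x' _ h
    simp only [Sigma.mk.injEq, heq_eq_eq] at h
    rw [← List.take_append_drop L x, ← List.take_append_drop L x', h.1, h.2]

end Words

lemma deletionBall_finite (t : ℕ) (x : List Bool) : (deletionBall t x).Finite :=
  x.sublists.toFinset.finite_toSet.subset fun _ hz => by simpa using hz.1

lemma append_mem_deletionBall {t : ℕ} {z a : List Bool} (u v : List Bool)
    (h : z ∈ deletionBall t a) : u ++ z ++ v ∈ deletionBall t (u ++ a ++ v) :=
  ⟨(h.1.append_left u).append_right v, by simp only [List.length_append]; have := h.2; omega⟩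

def alternating : ℕ → List Bool
  | 0 => []
  | k + 1 => false :: true :: alternating k

def pattern (m i : ℕ) : List Bool := alternating i ++ false :: alternating (m - i)

@[simp] lemma length_alternating (k : ℕ) : (alternating k).length = 2 * k := by
  induction k with
  | zero => rfl
  | succ k ih => simp [alternating, ih]; ring

@[simp] lemma count_true_alternating (k : ℕ) : (alternating k).count true = k := by
  induction k with
  | zero => rfl
  | succ k ih => simp [alternating, ih]

lemma alternating_add (a b : ℕ) : alternating (a + b) = alternating a ++ alternating b := by
  induction a with
  | zero => simp [alternating]
  | succ a ih => simp [alternating, Nat.succ_add, ih]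

lemma length_pattern {m i : ℕ} (h : i ≤ m) : (pattern m i).length = 2 * m + 1 := by
  simp [pattern]; omega

lemma pattern_eq_append_false_true {m i j : ℕ} (hij : i < j) :
    pattern m j = alternating i ++
      false :: true :: (alternating (j - i - 1) ++ false :: alternating (m - j)) := by
  rw [pattern, show j = i + (j - i - 1 + 1) by omega, alternating_add]
  simp [alternating]

lemma pattern_eq_append_false_false {m i : ℕ} (him : i < m) :
    pattern m i = alternating i ++ false :: false :: true :: alternating (m - i - 1) := by
  rw [pattern, show m - i = m - i - 1 + 1 by omega]
  rfl

lemma pattern_injOn (m : ℕ) : Set.InjOn (pattern m) (Set.Iic m) := by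
  suffices ∀ {i j}, i < j → j ≤ m → pattern m i ≠ pattern m j by
    intro i hi j hj h
    by_contra hne
    rcases Nat.lt_or_gt_of_ne hne with hlt | hlt
    · exact this hlt hj h
    · exact this hlt hi h.symm
  intro i j hij hjm h
  rw [pattern_eq_append_false_false (by omega), pattern_eq_append_false_true hij] at h
  simp at h

def twoZeros (m i j : ℕ) : List Bool :=
  alternating i ++ false :: (alternating (j - i - 1) ++ false :: alternating (m - j))

lemma alternating_mem_deletionBall_pattern {m i : ℕ} (h : i ≤ m) :
    alternating m ∈ deletionBall 1 (pattern m i) := by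
  refine ⟨?_, by rw [length_pattern h, length_alternating]⟩
  rw [pattern, show m = i + (m - i) by omega, alternating_add, Nat.add_sub_cancel_left]
  exact (List.sublist_cons_self _ _).append_left _

lemma twoZeros_mem_deletionBall_pattern_left {m i j : ℕ} (hij : i < j) (hjm : j ≤ m) :
    twoZeros m i j ∈ deletionBall 1 (pattern m i) := by
  refine ⟨?_, by simp [twoZeros, length_pattern (hij.le.trans hjm)]; omega⟩
  rw [pattern, show m - i = j - i - 1 + (m - j + 1) by omega, alternating_add, twoZeros]
  refine (List.Sublist.cons_cons _ ?_).append_left _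
  exact ((List.sublist_cons_self _ _).cons_cons _).append_left _

lemma twoZeros_mem_deletionBall_pattern_right {m i j : ℕ} (hij : i < j) (hjm : j ≤ m) :
    twoZeros m i j ∈ deletionBall 1 (pattern m j) := by
  refine ⟨?_, by simp [twoZeros, length_pattern hjm]; omega⟩
  rw [pattern_eq_append_false_true hij, twoZeros]
  exact ((List.sublist_cons_self _ _).cons_cons _).append_left _

lemma one_lt_ncard_inter_deletionBall_pattern {m i j : ℕ} (hij : i < j) (hjm : j ≤ m)
    (u v : List Bool) :
    1 < (deletionBall 1 (u ++ pattern m i ++ v) ∩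
      deletionBall 1 (u ++ pattern m j ++ v)).ncard := by
  rw [Set.one_lt_ncard ((deletionBall_finite _ _).inter_of_left _)]
  refine ⟨u ++ alternating m ++ v, ⟨?_, ?_⟩,
    u ++ twoZeros m i j ++ v, ⟨?_, ?_⟩, fun h => ?_⟩
  · exact append_mem_deletionBall u v
      (alternating_mem_deletionBall_pattern (hij.le.trans hjm))
  · exact append_mem_deletionBall u v (alternating_mem_deletionBall_pattern hjm)
  · exact append_mem_deletionBall u v (twoZeros_mem_deletionBall_pattern_left hij hjm)
  · exact append_mem_deletionBall u v (twoZeros_mem_deletionBall_pattern_right hij hjm)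
  · have := congrArg (List.count true) h
    simp [twoZeros] at this
    omega

namespace IsReconCode

variable {n : ℕ} {C : Set (List Bool)}

lemma finite {N t : ℕ} (hC : IsReconCode n N t C) : C.Finite :=
  (List.finite_length_eq Bool n).subset hC.1

lemma notMem_of_pattern_lt (hC : IsReconCode n 2 1 C) {m i j : ℕ} (hij : i < j) (hjm : j ≤ m)
    {u v : List Bool} (hx : u ++ pattern m i ++ v ∈ C) : u ++ pattern m j ++ v ∉ C := by
  intro hy
  have hne : u ++ pattern m i ++ v ≠ u ++ pattern m j ++ v := by
    simpa using (pattern_injOn m).ne (Set.mem_Iic.2 (hij.le.trans hjm)) (Set.mem_Iic.2 hjm) hij.ne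
  have := one_lt_ncard_inter_deletionBall_pattern hij hjm u v
  have := hC.2 _ hx _ hy hne
  omega

lemma pattern_eq (hC : IsReconCode n 2 1 C) {m i j : ℕ} (hi : i ≤ m) (hj : j ≤ m)
    {u v : List Bool} (hx : u ++ pattern m i ++ v ∈ C) (hy : u ++ pattern m j ++ v ∈ C) :
    i = j := by
  rcases lt_trichotomy i j with hij | hij | hji
  · exact absurd hy (hC.notMem_of_pattern_lt hij hj hx)
  · exact hij
  · exact absurd hx (hC.notMem_of_pattern_lt hji hi hy)

end IsReconCode

def patterns (m : ℕ) : Finset (List Bool) := (range (m + 1)).image (pattern m)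

lemma patterns_subset_words (m : ℕ) : patterns m ⊆ words Bool (2 * m + 1) := fun y hy => by
  obtain ⟨i, hi, rfl⟩ := mem_image.1 hy
  exact mem_words.2 (length_pattern (mem_range_succ_iff.1 hi))

lemma card_patterns (m : ℕ) : #(patterns m) = m + 1 := by
  rw [patterns, card_image_of_injOn, card_range]
  exact (pattern_injOn m).mono fun i hi => mem_range_succ_iff.1 hi

lemma succ_le_two_pow_two_mul_add_one (m : ℕ) : m + 1 ≤ 2 ^ (2 * m + 1) := by
  simpa [card_patterns, card_words] using card_le_card (patterns_subset_words m)

lemma card_words_sdiff_patterns (m : ℕ) :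
    #(words Bool (2 * m + 1) \ patterns m) = 2 ^ (2 * m + 1) - (m + 1) := by
  rw [card_sdiff_of_subset (patterns_subset_words m), card_patterns, card_words,
    Fintype.card_bool]

def PatternSeparated (m : ℕ) (S : Finset (List Bool)) : Prop :=
  ∀ u v : List Bool, ∀ i ≤ m, ∀ j ≤ m,
    u ++ pattern m i ++ v ∈ S → u ++ pattern m j ++ v ∈ S → i = j

namespace PatternSeparated

variable {m : ℕ} {S : Finset (List Bool)}

lemma preimage_append (hS : PatternSeparated m S) (y : List Bool) :
    PatternSeparated m (S.preimage (y ++ ·) (List.append_right_injective y).injOn) := by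
  intro u v i hi j hj hx hy
  simp only [mem_preimage, ← List.append_assoc] at hx hy
  exact hS (y ++ u) v i hi j hj hx hy

lemma sum_card_preimage_patterns_le (hS : PatternSeparated m S) {k : ℕ}
    (hlen : ∀ x ∈ S, x.length = 2 * m + 1 + k) :
    ∑ y ∈ patterns m,
      #(S.preimage (y ++ ·) (List.append_right_injective y).injOn) ≤ 2 ^ k := by
  rw [patterns, sum_image ((pattern_injOn m).mono fun i hi => mem_range_succ_iff.1 hi),
    ← card_biUnion]
  · calc _ ≤ #(words Bool k) := card_le_card fun z hz => by
          obtain ⟨i, hi, hz⟩ := mem_biUnion.1 hz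
          have := hlen _ (mem_preimage.1 hz)
          rw [List.length_append, length_pattern (mem_range_succ_iff.1 hi)] at this
          exact mem_words.2 (by omega)
      _ = 2 ^ k := by rw [card_words, Fintype.card_bool]
  · intro i hi j hj hij
    refine disjoint_left.2 fun z hzi hzj => hij ?_
    exact hS [] z i (mem_range_succ_iff.1 hi) j (mem_range_succ_iff.1 hj)
      (by simpa using mem_preimage.1 hzi) (by simpa using mem_preimage.1 hzj)

lemma card_mul_le {B r : ℕ} (hS : PatternSeparated m S)
    (hlen : ∀ x ∈ S, x.length = (2 * m + 1) * B + r) :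
    (m + 1) * #S ≤
      2 ^ ((2 * m + 1) * B + r) + m * 2 ^ r * (2 ^ (2 * m + 1) - (m + 1)) ^ B := by
  induction B generalizing S with
  | zero =>
    have : #S ≤ #(words Bool r) :=
      card_le_card fun x hx => mem_words.2 (by simpa using hlen x hx)
    rw [card_words, Fintype.card_bool] at this
    simp only [mul_zero, zero_add, pow_zero, mul_one]
    nlinarith
  | succ B ih =>
    set k := (2 * m + 1) * B + r
    set f : List Bool → ℕ :=
      fun y => #(S.preimage (y ++ ·) (List.append_right_injective y).injOn)
    have hlen' : ∀ x ∈ S, x.length = 2 * m + 1 + k := fun x hx => by rw [hlen x hx]; ring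
    have hsplit :
        #S ≤ ∑ y ∈ words Bool (2 * m + 1) \ patterns m, f y + ∑ y ∈ patterns m, f y := by
      rw [sum_sdiff (patterns_subset_words m)]
      exact card_le_sum_card_preimage_append fun x hx => by rw [hlen' x hx]; omega
    have hfib : ∀ y ∈ words Bool (2 * m + 1) \ patterns m,
        (m + 1) * f y ≤ 2 ^ k + m * 2 ^ r * (2 ^ (2 * m + 1) - (m + 1)) ^ B := fun y hy => by
      refine ih (hS.preimage_append y) fun z hz => ?_
      have := hlen' _ (mem_preimage.1 hz)
      rw [List.length_append, mem_words.1 (mem_sdiff.1 hy).1] at this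
      omega
    have hout := sum_le_card_nsmul _ _ _ hfib
    rw [← mul_sum, card_words_sdiff_patterns, smul_eq_mul] at hout
    obtain ⟨Q, hQ⟩ : ∃ Q, 2 ^ (2 * m + 1) = Q + (m + 1) :=
      ⟨2 ^ (2 * m + 1) - (m + 1), by have := succ_le_two_pow_two_mul_add_one m; omega⟩
    rw [hQ, Nat.add_sub_cancel] at hout ⊢
    calc (m + 1) * #S
        ≤ (m + 1) * ∑ y ∈ words Bool (2 * m + 1) \ patterns m, f y +
            (m + 1) * ∑ y ∈ patterns m, f y := by
          rw [← mul_add]; exact Nat.mul_le_mul_left _ hsplit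
      _ ≤ Q * (2 ^ k + m * 2 ^ r * Q ^ B) + (m + 1) * 2 ^ k := by
          gcongr; exact hS.sum_card_preimage_patterns_le hlen'
      _ = 2 ^ ((2 * m + 1) * (B + 1) + r) + m * 2 ^ r * Q ^ (B + 1) := by
          rw [show (2 * m + 1) * (B + 1) + r = 2 * m + 1 + k by ring, pow_add 2 (2 * m + 1) k,
            hQ]
          ring

end PatternSeparated

lemma mul_mul_pow_le_pow_succ (B w Q : ℕ) : B * w * Q ^ B ≤ (Q + w) ^ (B + 1) := by
  cases B with
  | zero => simp
  | succ B =>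
    have bernoulli :=
      pow_add_mul_le_add_pow (Nat.zero_le Q) (by positivity : 0 ≤ 2 * Q + w) (B + 1)
    rw [Nat.add_sub_cancel, Nat.cast_id] at bernoulli
    calc (B + 1) * w * Q ^ (B + 1) = Q * ((B + 1) * Q ^ B * w) := by ring
      _ ≤ (Q + w) * (Q + w) ^ (B + 1) := by gcongr <;> omega
      _ = (Q + w) ^ (B + 1 + 1) := by ring

lemma twelve_mul_add_thirteen_le_two_pow {m : ℕ} (hm : 7 ≤ m) : 12 * m + 13 ≤ 2 ^ m := by
  induction m, hm using Nat.le_induction with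
  | base => norm_num
  | succ m hm ih =>
    have : 12 ≤ 2 ^ m := le_trans (by omega) ih
    rw [pow_succ]
    omega

lemma succ_mul_two_pow_le_div_mul {n t : ℕ} (ht : 21 ≤ t) (hn : 2 ^ t ≤ n) :
    (t + 1) * 2 ^ (2 * (t / 3) + 1) ≤ n / (2 * (t / 3) + 1) * (t / 3 + 1) := by
  have h3 : t + 1 ≤ 3 * (t / 3 + 1) := by omega
  have hPn : (2 ^ (t / 3)) ^ 3 ≤ n :=
    calc (2 ^ (t / 3)) ^ 3 = 2 ^ (3 * (t / 3)) := by rw [← pow_mul, mul_comm]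
      _ ≤ 2 ^ t := Nat.pow_le_pow_right two_pos (Nat.mul_div_le t 3)
      _ ≤ n := hn
  have hP := twelve_mul_add_thirteen_le_two_pow (m := t / 3) (by omega)
  have hdiv := Nat.lt_mul_div_succ n (by omega : 0 < 2 * (t / 3) + 1)
  rw [pow_succ, pow_mul']
  generalize t / 3 = m at *
  generalize n / (2 * m + 1) = B at *
  generalize 2 ^ m = P at *
  have hPP : P ≤ P ^ 2 := Nat.le_self_pow two_ne_zero P
  nlinarith [Nat.mul_le_mul_right (P ^ 2) h3, Nat.mul_le_mul_right (P ^ 2) hP]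

namespace IsReconCode

variable {n : ℕ} {C : Set (List Bool)}

lemma patternSeparated (hC : IsReconCode n 2 1 C) (m : ℕ) :
    PatternSeparated m hC.finite.toFinset :=
  fun _ _ _ hi _ hj hx hy =>
    hC.pattern_eq hi hj (hC.finite.mem_toFinset.1 hx) (hC.finite.mem_toFinset.1 hy)

lemma div_mul_ncard_le (hC : IsReconCode n 2 1 C) (m : ℕ) :
    n / (2 * m + 1) * (m + 1) * C.ncard ≤ 2 ^ n * (n / (2 * m + 1) + 2 ^ (2 * m + 1)) := by
  set L := 2 * m + 1
  set B := n / L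
  set r := n % L
  have hn : n = L * B + r := (Nat.div_add_mod n L).symm
  have hX : m + 1 ≤ 2 ^ L := succ_le_two_pow_two_mul_add_one m
  obtain ⟨Q, hQ⟩ : ∃ Q, 2 ^ L = Q + (m + 1) := ⟨2 ^ L - (m + 1), by omega⟩
  have hcount := (hC.patternSeparated m).card_mul_le (B := B) (r := r)
    fun x hx => (hC.1 x (hC.finite.mem_toFinset.1 hx)).trans hn
  rw [← hn, ← Set.ncard_eq_toFinset_card C hC.finite, hQ, Nat.add_sub_cancel] at hcount
  have hbern := mul_mul_pow_le_pow_succ B (m + 1) Q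
  rw [← hQ] at hbern
  have h2n : 2 ^ n = 2 ^ r * (2 ^ L) ^ B := by rw [hn, pow_add, pow_mul]; ring
  have hm : m * (B * Q ^ B) ≤ (2 ^ L) ^ (B + 1) :=
    calc m * (B * Q ^ B) ≤ B * (m + 1) * Q ^ B := by nlinarith [Nat.zero_le (B * Q ^ B)]
      _ ≤ _ := hbern
  calc B * (m + 1) * C.ncard = B * ((m + 1) * C.ncard) := by ring
    _ ≤ B * (2 ^ n + m * 2 ^ r * Q ^ B) := by gcongr
    _ = B * 2 ^ n + 2 ^ r * (m * (B * Q ^ B)) := by ring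
    _ ≤ B * 2 ^ n + 2 ^ r * (2 ^ L) ^ (B + 1) := by gcongr
    _ = 2 ^ n * (B + 2 ^ L) := by rw [h2n]; ring

lemma log_succ_mul_ncard_le (hC : IsReconCode n 2 1 C) (hn : 2 ^ 21 ≤ n) :
    (Nat.log 2 n + 1) * C.ncard ≤ 4 * 2 ^ n := by
  have ht : 21 ≤ Nat.log 2 n := Nat.le_log_of_pow_le one_lt_two hn
  set t := Nat.log 2 n
  set m := t / 3
  set B := n / (2 * m + 1)
  have hcount := hC.div_mul_ncard_le m
  have hparam := succ_mul_two_pow_le_div_mul ht (Nat.pow_log_le_self 2 (by positivity))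
  have hpos : 0 < B * (m + 1) := lt_of_lt_of_le (by positivity) hparam
  refine Nat.le_of_mul_le_mul_left ?_ hpos
  calc B * (m + 1) * ((t + 1) * C.ncard) = (t + 1) * (B * (m + 1) * C.ncard) := by ring
    _ ≤ (t + 1) * (2 ^ n * (B + 2 ^ (2 * m + 1))) := by gcongr
    _ = 2 ^ n * ((t + 1) * B + (t + 1) * 2 ^ (2 * m + 1)) := by ring
    _ ≤ 2 ^ n * (3 * (m + 1) * B + B * (m + 1)) :=
        Nat.mul_le_mul_left _ (Nat.add_le_add (Nat.mul_le_mul_right _ (by omega)) hparam)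
    _ = B * (m + 1) * (4 * 2 ^ n) := by ring

end IsReconCode

/-- For all sufficiently large `n`, every `(n, 2; D_1)`-reconstruction code `C`
satisfies `|C| ≤ 4·2^n / log₂ n`; equivalently its redundancy is at least
`log₂ log₂ n − 2`. -/
theorem stmt8 :
    ∃ N₀ : ℕ, ∀ n : ℕ, N₀ ≤ n → ∀ C : Set (List Bool), IsReconCode n 2 1 C →
      (C.ncard : ℝ) ≤ 4 * 2 ^ n / Real.logb 2 n := by
  refine ⟨2 ^ 21, fun n hn C hC => ?_⟩
  have hcard : ((Nat.log 2 n + 1 : ℕ) : ℝ) * C.ncard ≤ 4 * 2 ^ n := by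
    exact_mod_cast hC.log_succ_mul_ncard_le hn
  have hlog_pos : 0 < Real.logb 2 n := by
    have h21 : (21 : ℝ) ≤ Nat.log 2 n := by exact_mod_cast Nat.le_log_of_pow_le one_lt_two hn
    have := Real.natLog_le_logb n 2
    push_cast at this
    linarith
  have hlog_lt : Real.logb 2 n < Nat.log 2 n + 1 := by
    have := Nat.lt_floor_add_one (Real.logb 2 n)
    rwa [← Nat.cast_ofNat, Real.natFloor_logb_natCast] at this
  rw [le_div_iff₀ hlog_pos]
  calc (C.ncard : ℝ) * Real.logb 2 n ≤ C.ncard * (Nat.log 2 n + 1) := by gcongr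
    _ ≤ 4 * 2 ^ n := by push_cast at hcard; linarith
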